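/- arXiv:1102.0856 — 5 statements merged into one kernel-verified Lean document; each statement's English description precedes it below -/
import Mathlib

section
/- For integers m, d, t with 0 ≤ t and t+1 ≤ m − d − 1 and d + 2 ≥ t + 1 (so that all binomial coefficients below make sense, with m ≥ d+2), one has ∑_{j=0}^{m} C(m−d−2, j−t−1) / C(m, j) = (m+1) / ((d+3) · C(d+2, t+1)). -/
/-!
Write `F(s, a, b) = ∑ᵢ C(s, i) / C(s + a, i + b)`. Pascal's rule in the numerator gives
`F(s + 1, a, b) = F(s, a + 1, b + 1) + F(s, a + 1, b)`, and the closed form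
`(s + a + 1) / ((a + 1) C(a, b))` obeys the same recursion because
`1 / C(n + 1, k + 1) + 1 / C(n + 1, k) = (n + 2) / ((n + 1) C(n, k))`.
The theorem is the case `s = m - d - 2`, `a = d + 2`, `b = t + 1`, after substituting `j = i + t + 1`.
-/

open Finset

section

variable {K : Type*} [Field K]

theorem inv_choose_succ_succ [CharZero K] (n k : ℕ) :
    ((n + 1).choose (k + 1) : K)⁻¹ = (k + 1) / ((n + 1) * n.choose k) := by
  have h : ((n : K) + 1) * n.choose k = (n + 1).choose (k + 1) * (k + 1) := by
    exact_mod_cast Nat.add_one_mul_choose_eq n k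
  rw [h, div_mul_cancel_right₀ (Nat.cast_add_one_ne_zero k)]

theorem inv_choose_succ [CharZero K] {n k : ℕ} (hk : k ≤ n) :
    ((n + 1).choose k : K)⁻¹ = (n + 1 - k : ℕ) / ((n + 1) * n.choose k) := by
  have h : ((n : K) + 1) * n.choose k = (n + 1).choose k * (n + 1 - k : ℕ) := by
    rw [mul_comm]
    exact_mod_cast Nat.choose_mul_succ_eq n k
  rw [h, div_mul_cancel_right₀ (by exact_mod_cast (by omega : n + 1 - k ≠ 0))]

theorem inv_choose_succ_succ_add_inv_choose_succ [CharZero K] {n k : ℕ} (hk : k ≤ n) :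
    ((n + 1).choose (k + 1) : K)⁻¹ + ((n + 1).choose k : K)⁻¹ =
      (n + 2) / ((n + 1) * n.choose k) := by
  rw [inv_choose_succ_succ, inv_choose_succ hk, ← add_div, Nat.cast_sub (by omega)]
  push_cast
  ring_nf

theorem sum_choose_div_choose_add_succ (s a b : ℕ) :
    ∑ i ∈ range (s + 2), ((s + 1).choose i : K) / (s + 1 + a).choose (i + b) =
      ∑ i ∈ range (s + 1), (s.choose i : K) / (s + (a + 1)).choose (i + (b + 1)) +
        ∑ i ∈ range (s + 1), (s.choose i : K) / (s + (a + 1)).choose (i + b) := by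
  have hN : s + 1 + a = s + (a + 1) := by omega
  have hshift : ∑ i ∈ range (s + 1), (s.choose (i + 1) : K) / (s + (a + 1)).choose (i + 1 + b) +
      ((s + 1).choose 0 : K) / (s + (a + 1)).choose (0 + b) =
        ∑ i ∈ range (s + 1), (s.choose i : K) / (s + (a + 1)).choose (i + b) := by
    rw [show (s + 1).choose 0 = s.choose 0 by simp,
      ← sum_range_succ' (fun i ↦ (s.choose i : K) / (s + (a + 1)).choose (i + b)),
      sum_range_succ, Nat.choose_succ_self, Nat.cast_zero, zero_div, add_zero]
  rw [sum_range_succ', hN]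
  simp only [Nat.choose_succ_succ', Nat.cast_add, add_div, sum_add_distrib]
  rw [add_assoc, hshift]
  simp only [add_right_comm _ 1 b, add_assoc]

theorem sum_choose_div_choose_add [CharZero K] (s : ℕ) {a b : ℕ} (hb : b ≤ a) :
    ∑ i ∈ range (s + 1), (s.choose i : K) / (s + a).choose (i + b) =
      (s + a + 1) / ((a + 1) * a.choose b) := by
  induction s generalizing a b with
  | zero =>
    have : (a.choose b : K) ≠ 0 := by exact_mod_cast (Nat.choose_pos hb).ne'
    simp only [zero_add, range_one, sum_singleton, Nat.choose_self, Nat.cast_one, one_div,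
      CharP.cast_eq_zero]
    field_simp
  | succ s ih =>
    rw [sum_choose_div_choose_add_succ, ih (by omega : b + 1 ≤ a + 1), ih (by omega : b ≤ a + 1)]
    have ha : (a : K) + 2 ≠ 0 := by exact_mod_cast (a + 1).succ_ne_zero
    calc _ = (s + a + 2 : K) / (a + 2) *
          (((a + 1).choose (b + 1) : K)⁻¹ + ((a + 1).choose b : K)⁻¹) := by
          push_cast
          simp only [div_eq_mul_inv, mul_inv]
          ring
      _ = _ := by
          rw [inv_choose_succ_succ_add_inv_choose_succ hb, div_mul_div_comm, mul_comm (a + 2 : K),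
            mul_div_mul_right _ _ ha]
          push_cast
          ring

end

theorem sum_choose_div_choose (m d t : ℕ) (h1 : d + t + 2 ≤ m) (h2 : t + 1 ≤ d + 2) :
    ∑ j ∈ Finset.range (m + 1),
        (if t + 1 ≤ j then ((m - d - 2).choose (j - t - 1) : ℚ) else 0) / (m.choose j) =
      (m + 1) / ((d + 3) * ((d + 2).choose (t + 1))) := by
  obtain ⟨s, rfl⟩ : ∃ s, m = s + (d + 2) := ⟨m - (d + 2), by omega⟩
  obtain ⟨r, hr⟩ : ∃ r, s + (d + 2) + 1 = t + 1 + (s + 1 + r) := ⟨d + 1 - t, by omega⟩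
  rw [hr, sum_range_add _ (t + 1), sum_range_add _ (s + 1),
    sum_eq_zero (s := range (t + 1)) fun j hj ↦ ?below,
    sum_eq_zero (s := range r) fun i _ ↦ ?above, zero_add, add_zero]
  case below => rw [if_neg (not_le.mpr (mem_range.mp hj)), zero_div]
  case above =>
    rw [if_pos (by omega), Nat.choose_eq_zero_of_lt (by omega), Nat.cast_zero, zero_div]
  have hterm (i : ℕ) : (if t + 1 ≤ t + 1 + i then ((s + (d + 2) - d - 2).choose (t + 1 + i - t - 1) : ℚ)
      else 0) / (s + (d + 2)).choose (t + 1 + i) =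
        (s.choose i : ℚ) / (s + (d + 2)).choose (i + (t + 1)) := by
    rw [if_pos (by omega), show s + (d + 2) - d - 2 = s by omega,
      show t + 1 + i - t - 1 = i by omega, add_comm (t + 1)]
  simp only [hterm, sum_choose_div_choose_add s h2]
  push_cast
  ring
end

section
/- For integers d ≥ 0, 0 ≤ l ≤ d, and 0 ≤ j ≤ d, one has ∑_{i=−1}^{j} (−1)^{j−i} C(d−i+1, j−i) · C(l+1, d−i+1) = 1 if j = d−l and 0 otherwise. -/
/-!
Substituting `m = j + 1 - k` and writing `d = j + a`, the `m`-th term becomes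
`(-1)^m C(a+1+m, m) C(l+1, a+1+m) = (-1)^m C(l+1, a+1) C(l-a, m)`, so the sum is
`C(l+1, a+1)` times a full alternating sum of `C(l-a, ·)` (it is full because `l - a ≤ j`).
That alternating sum vanishes unless `l ≤ a`, and then `C(l+1, a+1)` vanishes unless `l = a`.
-/

open Finset

theorem Nat.add_choose_mul_choose_add (n b m : ℕ) :
    (b + m).choose m * n.choose (b + m) = n.choose b * (n - b).choose m := by
  rw [← Nat.choose_symm_add, mul_comm, Nat.choose_mul (Nat.le_add_right b m),
    Nat.add_sub_cancel_left]

theorem Int.alternating_sum_range_choose_of_lt {n M : ℕ} (h : n < M) :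
    ∑ m ∈ Finset.range M, ((-1) ^ m * n.choose m : ℤ) = if n = 0 then 1 else 0 := by
  rw [← Int.alternating_sum_range_choose]
  refine (sum_subset (range_subset_range.2 h) fun m _ hm => ?_).symm
  rw [Nat.choose_eq_zero_of_lt (by simpa using hm)]
  simp

theorem alternating_sum_choose_mul_choose_eq_ite (d l j : ℕ) (hl : l ≤ d) (hj : j ≤ d) :
    ∑ k ∈ Finset.range (j + 2),
        (-1 : ℤ) ^ (j + 1 - k) * ((d + 2 - k).choose (j + 1 - k)) *
          ((l + 1).choose (d + 2 - k)) =
      if j = d - l then 1 else 0 := by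
  obtain ⟨a, rfl⟩ : ∃ a, d = j + a := ⟨d - j, by omega⟩
  have reflect : ∑ k ∈ range (j + 2),
        (-1 : ℤ) ^ (j + 1 - k) * ((j + a + 2 - k).choose (j + 1 - k)) *
          ((l + 1).choose (j + a + 2 - k)) =
      ∑ m ∈ range (j + 2),
        (-1 : ℤ) ^ m * ((a + 1 + m).choose m * (l + 1).choose (a + 1 + m) : ℕ) := by
    rw [← sum_range_reflect]
    refine sum_congr rfl fun m hm => ?_
    have hm : m < j + 2 := mem_range.1 hm
    rw [show j + 1 - (j + 2 - 1 - m) = m by omega,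
      show j + a + 2 - (j + 2 - 1 - m) = a + 1 + m by omega]
    push_cast
    ring
  simp_rw [reflect, Nat.add_choose_mul_choose_add, Nat.add_sub_add_right, Nat.cast_mul,
    mul_left_comm _ ((l + 1).choose (a + 1) : ℤ), ← mul_sum,
    Int.alternating_sum_range_choose_of_lt (show l - a < j + 2 by omega)]
  rcases lt_trichotomy l a with hla | rfl | hla
  · simp [Nat.choose_eq_zero_of_lt (Nat.succ_lt_succ hla), show j ≠ j + a - l by omega]
  · simp
  · simp [show l - a ≠ 0 by omega, show j ≠ j + a - l by omega]
end

section
/- For integers d ≥ 0, 0 ≤ l ≤ d, and 0 ≤ j ≤ d, one has ∑_{i=−1}^{j} (−1)^{j−i} C(d−i+1, j−i) · C(d+1−l, i−l) = 1 if j = l and 0 otherwise. -/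
open Finset

/-- Binomial inversion: `C(n, m) C(n-m, J-m) = C(n, J) C(J, m)` reduces the sum to
`C(n, J) (1 - 1)^J`. -/
theorem sum_range_neg_one_pow_mul_choose_sub_mul_choose {R : Type*} [CommRing R] (n J : ℕ) :
    ∑ m ∈ range (J + 1), (-1 : R) ^ (J - m) * ((n - m).choose (J - m) : R) * (n.choose m : R) =
      if J = 0 then 1 else 0 := by
  have hterm : ∀ m ∈ range (J + 1),
      (-1 : R) ^ (J - m) * ((n - m).choose (J - m) : R) * (n.choose m : R) =
        (n.choose J : R) * (1 ^ m * (-1) ^ (J - m) * (J.choose m : R)) := by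
    intro m hm
    have hchoose : (n.choose J : R) * J.choose m = n.choose m * (n - m).choose (J - m) := by
      exact_mod_cast congrArg (Nat.cast : ℕ → R)
        (Nat.choose_mul (n := n) (Nat.lt_succ_iff.mp (mem_range.mp hm)))
    linear_combination (-1 : R) ^ (J - m) * hchoose.symm
  rw [sum_congr rfl hterm, ← mul_sum, ← add_pow, add_neg_cancel, zero_pow_eq]
  split_ifs with hJ <;> simp [hJ]

theorem alternating_sum_choose_mul_choose_eq_ite'_general (d l j : ℕ) :
    ∑ k ∈ Finset.range (j + 2),
        (-1 : ℤ) ^ (j + 1 - k) * ((d + 2 - k).choose (j + 1 - k)) *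
          (if l + 1 ≤ k then ((d + 1 - l).choose (k - 1 - l) : ℤ) else 0) =
      if j = l then 1 else 0 := by
  rcases lt_or_ge j l with hjl | hlj
  · rw [if_neg hjl.ne]
    refine sum_eq_zero fun k hk => ?_
    rw [if_neg (by simp only [mem_range] at hk; omega), mul_zero]
  · -- only the indices `k = l + 1 + m` contribute
    obtain ⟨J, rfl⟩ := Nat.exists_eq_add_of_le hlj
    rw [show l + J + 2 = (l + 1) + (J + 1) by omega, sum_range_add,
      sum_eq_zero fun k hk => by rw [if_neg (by simp only [mem_range] at hk; omega), mul_zero],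
      zero_add]
    have hreindex : ∀ m ∈ range (J + 1),
        (-1 : ℤ) ^ (l + J + 1 - (l + 1 + m)) *
            ((d + 2 - (l + 1 + m)).choose (l + J + 1 - (l + 1 + m))) *
          (if l + 1 ≤ l + 1 + m then ((d + 1 - l).choose (l + 1 + m - 1 - l) : ℤ) else 0) =
        (-1 : ℤ) ^ (J - m) * ((d + 1 - l - m).choose (J - m)) * ((d + 1 - l).choose m) := by
      intro m _
      rw [if_pos (by omega), show l + J + 1 - (l + 1 + m) = J - m by omega,
        show d + 2 - (l + 1 + m) = d + 1 - l - m by omega, show l + 1 + m - 1 - l = m by omega]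
    rw [sum_congr rfl hreindex, sum_range_neg_one_pow_mul_choose_sub_mul_choose]
    simp

theorem alternating_sum_choose_mul_choose_eq_ite' (d l j : ℕ) (hl : l ≤ d) (hj : j ≤ d) :
    ∑ k ∈ Finset.range (j + 2),
        (-1 : ℤ) ^ (j + 1 - k) * ((d + 2 - k).choose (j + 1 - k)) *
          (if l + 1 ≤ k then ((d + 1 - l).choose (k - 1 - l) : ℤ) else 0) =
      if j = l then 1 else 0 :=
  alternating_sum_choose_mul_choose_eq_ite'_general d l j
end

section
/- Let X be a d-dimensional simplicial complex with finitely many vertices. Then for 0 ≤ j ≤ d, ∑_{x ∈ V(X)} g_j(lk_X(x)) = (d+2−j)·g_j(X) + (j+1)·g_{j+1}(X), where lk_X(x) is the vertex link of x (a complex of dimension ≤ d−1, whose g-vector is computed with ambient dimension d−1). -/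
open Finset

/-- An abstract simplicial complex on vertex set `V`, given as a finite, downward closed
family of finite sets containing the empty face. -/
def IsComplex {V : Type*} (X : Finset (Finset V)) : Prop :=
  ∅ ∈ X ∧ ∀ s ∈ X, ∀ t ⊆ s, t ∈ X

/-- `fc X j` is the number of faces of `X` of cardinality `j`
(so `fc X (i+1)` is the number of `i`-dimensional faces, and `fc X 0 = 1`). -/
def fc {V : Type*} (X : Finset (Finset V)) (j : ℕ) : ℕ :=
  (X.filter fun s => s.card = j).card

/-- The full simplex on the vertex set `σ`. -/
def simplexC {V : Type*} [DecidableEq V] (σ : Finset V) : Finset (Finset V) :=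
  σ.powerset

/-- The boundary complex of the simplex on `σ` (all proper subsets of `σ`). -/
def boundaryC {V : Type*} [DecidableEq V] (σ : Finset V) : Finset (Finset V) :=
  σ.powerset.erase σ

/-- The join of two families of faces (on disjoint vertex sets). -/
def joinC {V : Type*} [DecidableEq V] (A B : Finset (Finset V)) : Finset (Finset V) :=
  (A ×ˢ B).image fun p => p.1 ∪ p.2

/-- The induced subcomplex of `X` on the vertex set `W`. -/
def inducedC {V : Type*} [DecidableEq V] (X : Finset (Finset V)) (W : Finset V) :
    Finset (Finset V) :=
  X.filter fun s => s ⊆ W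

/-- The vertex set of a complex. -/
def vertexSet {V : Type*} [DecidableEq V] (X : Finset (Finset V)) : Finset V :=
  X.sup id

/-- The link of a vertex `x` in `X`. -/
def linkC {V : Type*} [DecidableEq V] (X : Finset (Finset V)) (x : V) :
    Finset (Finset V) :=
  X.filter fun s => x ∉ s ∧ insert x s ∈ X

/-- `X` is pure of dimension `d`: every face has dimension at most `d` and is contained
in a face of dimension exactly `d`. -/
def PureDim {V : Type*} (X : Finset (Finset V)) (d : ℕ) : Prop :=
  (∀ s ∈ X, s.card ≤ d + 1) ∧ ∀ s ∈ X, ∃ F ∈ X, s ⊆ F ∧ F.card = d + 1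

/-- `Y` is obtained from `X` by the bistellar move `α ↦ β`: the induced subcomplex of `X`
on `α ⊔ β` is `α̅ * ∂β`, and `Y` is obtained by replacing it with `∂α * β̅`. -/
def BistellarMove {V : Type*} [DecidableEq V] (X Y : Finset (Finset V))
    (α β : Finset V) : Prop :=
  α.Nonempty ∧ β.Nonempty ∧ Disjoint α β ∧
  inducedC X (α ∪ β) = joinC (simplexC α) (boundaryC β) ∧
  Y = (X \ joinC (simplexC α) (boundaryC β)) ∪ joinC (boundaryC α) (simplexC β)

/-- The `g`-vector of a `d`-dimensional complex:
`g_j(X) = ∑_{i=−1}^{j−1} (−1)^{j−i−1} C(d−i+1, j−i−1) f_i(X)` (here `k = i + 1`). -/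
def gvec {V : Type*} (d : ℕ) (X : Finset (Finset V)) (j : ℕ) : ℤ :=
  ∑ k ∈ Finset.range (j + 1),
    (-1 : ℤ) ^ (j - k) * ((d + 2 - k).choose (j - k)) * (fc X k : ℤ)

lemma sum_fc_link {V : Type*} [DecidableEq V] (X : Finset (Finset V)) (hX : IsComplex X)
    (k : ℕ) : ∑ x ∈ vertexSet X, fc (linkC X x) k = (k + 1) * fc X (k + 1) := by
  classical
  have hcard : ∀ x, fc (linkC X x) k = (X.filter fun t => x ∈ t ∧ t.card = k + 1).card := by
    intro x
    unfold fc linkC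
    rw [Finset.filter_filter]
    apply Finset.card_bij (fun s _ => insert x s)
    · intro s hs
      simp only [Finset.mem_filter] at hs ⊢
      obtain ⟨hsX, ⟨hxs, hins⟩, hc⟩ := hs
      exact ⟨hins, Finset.mem_insert_self x s,
        by rw [Finset.card_insert_of_notMem hxs, hc]⟩
    · intro s hs s' hs' h
      simp only [Finset.mem_filter] at hs hs'
      have := congrArg (fun u => Finset.erase u x) h
      simpa [Finset.erase_insert hs.2.1.1, Finset.erase_insert hs'.2.1.1] using this
    · intro t ht
      simp only [Finset.mem_filter] at ht
      obtain ⟨htX, hxt, hc⟩ := ht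
      refine ⟨t.erase x, ?_, Finset.insert_erase hxt⟩
      simp only [Finset.mem_filter]
      refine ⟨hX.2 t htX _ (Finset.erase_subset x t),
        ⟨Finset.notMem_erase x t, by rw [Finset.insert_erase hxt]; exact htX⟩, ?_⟩
      rw [Finset.card_erase_of_mem hxt, hc]; omega
  calc ∑ x ∈ vertexSet X, fc (linkC X x) k
      = ∑ x ∈ vertexSet X, ∑ t ∈ X, if x ∈ t ∧ t.card = k + 1 then 1 else 0 := by
        simp only [hcard, Finset.card_filter]
    _ = ∑ t ∈ X, ∑ x ∈ vertexSet X, if x ∈ t ∧ t.card = k + 1 then 1 else 0 :=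
        Finset.sum_comm
    _ = ∑ t ∈ X, if t.card = k + 1 then (k + 1) else 0 := by
        refine Finset.sum_congr rfl fun t ht => ?_
        have htV : t ⊆ vertexSet X := Finset.le_sup (f := id) ht
        by_cases h : t.card = k + 1
        · simp only [h, and_true, if_true]
          rw [← Finset.card_filter, Finset.filter_mem_eq_inter,
            Finset.inter_eq_right.mpr htV, h]
        · simp [h]
    _ = (k + 1) * fc X (k + 1) := by
        rw [← Finset.sum_filter, Finset.sum_const, smul_eq_mul]
        rw [fc, mul_comm]

lemma coeff_id (d j k : ℕ) (hk : k < j) (hj : j ≤ d) :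
    (-1 : ℤ) ^ (j - k) * ((d - 1 + 2 - k).choose (j - k)) * ((k : ℤ) + 1)
      = ((d : ℤ) + 2 - j) *
          ((-1 : ℤ) ^ (j - (k + 1)) * ((d + 2 - (k + 1)).choose (j - (k + 1))))
        + ((j : ℤ) + 1) *
          ((-1 : ℤ) ^ (j + 1 - (k + 1)) * ((d + 2 - (k + 1)).choose (j + 1 - (k + 1)))) := by
  have h1 : j - k = (j - (k + 1)) + 1 := by omega
  have h2 : j + 1 - (k + 1) = (j - (k + 1)) + 1 := by omega
  have h3 : d - 1 + 2 - k = d + 2 - (k + 1) := by omega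
  set r := j - (k + 1) with hr
  set n := d + 2 - (k + 1) with hn
  rw [h1, h2, h3]
  have hc := Nat.choose_succ_right_eq n r
  have hnr : n - r = d + 2 - j := by omega
  rw [hnr] at hc
  have hcZ : (n.choose (r + 1) : ℤ) * ((r : ℤ) + 1) = (n.choose r : ℤ) * ((d : ℤ) + 2 - j) := by
    zify [show j ≤ d + 2 from by omega] at hc
    linarith [hc]
  have hrZ : (r : ℤ) + 1 = (j : ℤ) - k := by
    have hrk : r + (k + 1) = j := by omega
    have := congrArg (Nat.cast (R := ℤ)) hrk
    push_cast at this
    linarith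
  rw [pow_succ]
  linear_combination ((-1 : ℤ) ^ r) * hcZ - ((-1 : ℤ) ^ r * (n.choose (r + 1) : ℤ)) * hrZ

lemma coeff0 (d j : ℕ) (hj : j ≤ d) :
    ((d : ℤ) + 2 - j) * ((-1 : ℤ) ^ j * ((d + 2).choose j))
      + ((j : ℤ) + 1) * ((-1 : ℤ) ^ (j + 1) * ((d + 2).choose (j + 1))) = 0 := by
  have hc := Nat.choose_succ_right_eq (d + 2) j
  zify [show j ≤ d + 2 from by omega] at hc
  rw [pow_succ]
  linear_combination (-(-1 : ℤ) ^ j) * hc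

lemma gvec_succ {V : Type*} (d : ℕ) (X : Finset (Finset V)) (j : ℕ) :
    gvec d X (j + 1) =
      (∑ k ∈ Finset.range (j + 1),
        (-1 : ℤ) ^ (j + 1 - k) * ((d + 2 - k).choose (j + 1 - k)) * (fc X k : ℤ))
        + (fc X (j + 1) : ℤ) := by
  unfold gvec
  rw [Finset.sum_range_succ]
  simp

/-- For a `d`-dimensional complex `X`,
`∑_{x ∈ V(X)} g_j(lk_X(x)) = (d+2−j) g_j(X) + (j+1) g_{j+1}(X)` for `0 ≤ j ≤ d`,
the links being given ambient dimension `d − 1`. -/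
theorem sum_gvec_link {V : Type*} [DecidableEq V] (X : Finset (Finset V)) (d : ℕ)
    (hX : IsComplex X) (hXd : ∀ s ∈ X, s.card ≤ d + 1) (j : ℕ) (hj : j ≤ d) :
    ∑ x ∈ vertexSet X, gvec (d - 1) (linkC X x) j =
      ((d : ℤ) + 2 - j) * gvec d X j + ((j : ℤ) + 1) * gvec d X (j + 1) := by
  classical
  have h1 : ∑ x ∈ vertexSet X, gvec (d - 1) (linkC X x) j
      = ∑ k ∈ Finset.range (j + 1),
          (-1 : ℤ) ^ (j - k) * ((d - 1 + 2 - k).choose (j - k))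
            * (((k : ℤ) + 1) * (fc X (k + 1) : ℤ)) := by
    unfold gvec
    rw [Finset.sum_comm]
    refine Finset.sum_congr rfl fun k _ => ?_
    rw [← Finset.mul_sum]
    congr 1
    exact_mod_cast congrArg (Nat.cast (R := ℤ)) (sum_fc_link X hX k)
  rw [h1, Finset.sum_range_succ, gvec_succ]
  have htop : (-1 : ℤ) ^ (j - j) * ((d - 1 + 2 - j).choose (j - j))
      * (((j : ℤ) + 1) * (fc X (j + 1) : ℤ)) = ((j : ℤ) + 1) * (fc X (j + 1) : ℤ) := by
    simp [Nat.sub_self]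
  rw [htop]
  have h2 : ((d : ℤ) + 2 - j) * gvec d X j
      + ((j : ℤ) + 1) * (∑ k ∈ Finset.range (j + 1),
          (-1 : ℤ) ^ (j + 1 - k) * ((d + 2 - k).choose (j + 1 - k)) * (fc X k : ℤ))
      = ∑ k ∈ Finset.range (j + 1),
          (((d : ℤ) + 2 - j) * ((-1 : ℤ) ^ (j - k) * ((d + 2 - k).choose (j - k)) * (fc X k : ℤ))
          + ((j : ℤ) + 1) * ((-1 : ℤ) ^ (j + 1 - k) * ((d + 2 - k).choose (j + 1 - k)) * (fc X k : ℤ))) := by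
    unfold gvec
    rw [Finset.mul_sum, Finset.mul_sum, ← Finset.sum_add_distrib]
  have h3 : ∑ k ∈ Finset.range (j + 1),
      (((d : ℤ) + 2 - j) * ((-1 : ℤ) ^ (j - k) * ((d + 2 - k).choose (j - k)) * (fc X k : ℤ))
      + ((j : ℤ) + 1) * ((-1 : ℤ) ^ (j + 1 - k) * ((d + 2 - k).choose (j + 1 - k)) * (fc X k : ℤ)))
      = ∑ k ∈ Finset.range j,
          (((d : ℤ) + 2 - j) * ((-1 : ℤ) ^ (j - (k + 1)) * ((d + 2 - (k + 1)).choose (j - (k + 1))) * (fc X (k + 1) : ℤ))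
          + ((j : ℤ) + 1) * ((-1 : ℤ) ^ (j + 1 - (k + 1)) * ((d + 2 - (k + 1)).choose (j + 1 - (k + 1))) * (fc X (k + 1) : ℤ))) := by
    rw [Finset.sum_range_succ']
    have h0 : (((d : ℤ) + 2 - j) * ((-1 : ℤ) ^ (j - 0) * ((d + 2 - 0).choose (j - 0)) * (fc X 0 : ℤ))
        + ((j : ℤ) + 1) * ((-1 : ℤ) ^ (j + 1 - 0) * ((d + 2 - 0).choose (j + 1 - 0)) * (fc X 0 : ℤ))) = 0 := by
      simp only [Nat.sub_zero]
      linear_combination (fc X 0 : ℤ) * coeff0 d j hj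
    rw [h0, add_zero]
  rw [mul_add, ← add_assoc, h2, h3]
  congr 1
  refine Finset.sum_congr rfl fun k hk => ?_
  have hkj : k < j := Finset.mem_range.mp hk
  linear_combination (fc X (k + 1) : ℤ) * coeff_id d j k hkj hj
end

section
/- Let B be a triangulated ball that is k-shelled (obtained from a standard ball by shelling moves all of index < k). Then B is k-stacked, i.e., every face of B of codimension at least k+1 lies in the boundary ∂B. -/
open Finset

/-- The boundary `d`-faces of a `(d+1)`-dimensional weak pseudomanifold `Z`:
faces of dimension `d` lying in exactly one facet. -/
def boundaryFacets {V : Type*} [DecidableEq V] (Z : Finset (Finset V)) (d : ℕ) :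
    Finset (Finset V) :=
  Z.filter fun s => s.card = d + 1 ∧ (Z.filter fun F => F.card = d + 2 ∧ s ⊆ F).card = 1

/-- The boundary complex of a `(d+1)`-dimensional weak pseudomanifold `Z`: the subcomplex
generated by the boundary `d`-faces. -/
def boundaryComplex {V : Type*} [DecidableEq V] (Z : Finset (Finset V)) (d : ℕ) :
    Finset (Finset V) :=
  Z.filter fun t => ∃ s ∈ boundaryFacets Z d, t ⊆ s

/-- `X` is obtained from `Y` by the shelling move `α ⤳ β`: a single new facet `α ⊔ β`
is glued onto `Y` along `α̅ * ∂β`, which is the induced subcomplex of `Y` on `α ⊔ β`. -/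
def ShellingMove {V : Type*} [DecidableEq V] (Y X : Finset (Finset V))
    (α β : Finset V) : Prop :=
  Y ⊆ X ∧ Disjoint α β ∧ β.Nonempty ∧ (α ∪ β) ∉ Y ∧
  X = Y ∪ (α ∪ β).powerset ∧
  inducedC Y (α ∪ β) = joinC (simplexC α) (boundaryC β)

/-- `IsKShelled k n X`: `X` is obtained from the standard ball (the full simplex on `n`
vertices, of dimension `n − 1`) by shelling moves, each of index `< k`
(i.e. with `β.card ≤ k`). -/
inductive IsKShelled {V : Type*} [DecidableEq V] (k n : ℕ) : Finset (Finset V) → Prop where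
  | std : ∀ σ : Finset V, σ.card = n → IsKShelled k n σ.powerset
  | move : ∀ (Y X : Finset (Finset V)) (α β : Finset V),
      IsKShelled k n Y → ShellingMove Y X α β → α.card + β.card = n → β.card ≤ k →
      IsKShelled k n X


lemma mem_join_simplex_boundary {V : Type*} [DecidableEq V] {α β t : Finset V} :
    t ∈ joinC (simplexC α) (boundaryC β) ↔ ∃ a ⊆ α, ∃ b, b ⊆ β ∧ b ≠ β ∧ t = a ∪ b := by
  simp only [joinC, simplexC, boundaryC, Finset.mem_image, Finset.mem_product, Prod.exists,
    Finset.mem_powerset, Finset.mem_erase]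
  constructor
  · rintro ⟨a, b, ⟨ha, hb1, hb2⟩, rfl⟩
    exact ⟨a, ha, b, hb2, hb1, rfl⟩
  · rintro ⟨a, ha, b, hb1, hb2, rfl⟩
    exact ⟨a, b, ⟨ha, hb2, hb1⟩, rfl⟩

lemma pow_filter_eq {V : Type*} [DecidableEq V] (σ u : Finset V) (m : ℕ)
    (hσ : σ.card = m) (hu : u ⊆ σ) :
    (σ.powerset.filter fun F => F.card = m ∧ u ⊆ F) = {σ} := by
  ext t
  simp only [mem_filter, mem_powerset, mem_singleton]
  constructor
  · rintro ⟨h1, h2, h3⟩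
    exact Finset.eq_of_subset_of_card_le h1 (by omega)
  · rintro rfl
    exact ⟨Subset.rfl, hσ, hu⟩

lemma pow_filter_empty {V : Type*} [DecidableEq V] (σ u : Finset V) (m : ℕ)
    (hσ : σ.card = m) (hu : ¬ u ⊆ σ) :
    (σ.powerset.filter fun F => F.card = m ∧ u ⊆ F) = ∅ := by
  ext t
  simp only [mem_filter, mem_powerset, notMem_empty, iff_false]
  rintro ⟨h1, h2, h3⟩
  exact hu (by rwa [Finset.eq_of_subset_of_card_le h1 (by omega)] at h3)

lemma IsKShelled.downclosed {V : Type*} [DecidableEq V] {k n : ℕ} {X : Finset (Finset V)}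
    (h : IsKShelled k n X) : ∀ s ∈ X, ∀ t ⊆ s, t ∈ X := by
  induction h with
  | std σ hσ =>
    intro s hs t ht
    simp only [Finset.mem_powerset] at *
    exact ht.trans hs
  | move Y X α β hY hmove hcard hk ih =>
    intro s hs t ht
    obtain ⟨hYX, hdisj, hβ, hnot, hXeq, hind⟩ := hmove
    rw [hXeq] at hs ⊢
    rcases Finset.mem_union.1 hs with h1 | h1
    · exact Finset.mem_union_left _ (ih s h1 t ht)
    · exact Finset.mem_union_right _
        (Finset.mem_powerset.2 (ht.trans (Finset.mem_powerset.1 h1)))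


/-- A `k`-shelled `(d+1)`-ball is `k`-stacked: every face of dimension `≤ d − k`
(i.e. of codimension `≥ k + 1`) lies in the boundary. -/
theorem kShelled_is_kStacked {V : Type*} [DecidableEq V]
    (B : Finset (Finset V)) (k d : ℕ) (hB : IsKShelled k (d + 2) B) :
    ∀ s ∈ B, s.card + k ≤ d + 1 → s ∈ boundaryComplex B d := by
  induction hB with
  | std σ hσ =>
    intro s hs hcard
    rw [Finset.mem_powerset] at hs
    obtain ⟨F, hsF, hFσ, hFc⟩ := Finset.exists_subsuperset_card_eq hs
      (show s.card ≤ d + 1 by omega) (show d + 1 ≤ σ.card by omega)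
    refine Finset.mem_filter.2 ⟨Finset.mem_powerset.2 hs, F,
      Finset.mem_filter.2 ⟨Finset.mem_powerset.2 hFσ, hFc, ?_⟩, hsF⟩
    rw [pow_filter_eq σ F (d + 2) hσ hFσ]
    simp
  | move Y X α β hY hmove hn hk ih =>
    obtain ⟨hYX, hdisj, hβ, hnotin, hXeq, hind⟩ := hmove
    have hYdc := hY.downclosed
    set σ := α ∪ β with hσdef
    have hσcard : σ.card = d + 2 := by
      rw [hσdef, Finset.card_union_of_disjoint hdisj]; omega
    intro s hs hcard
    by_cases hsσ : s ⊆ σ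
    · -- `s` lies in the new facet: use `σ.erase w` for `w ∈ α \ s`
      have hαs : ¬ α ⊆ s := by
        intro h
        have := Finset.card_le_card h
        omega
      obtain ⟨w, hwα, hws⟩ := Finset.not_subset.1 hαs
      have hwσ : w ∈ σ := Finset.mem_union_left _ hwα
      set F := σ.erase w with hF
      have hsF : s ⊆ F := fun x hx => Finset.mem_erase.2 ⟨fun h => hws (h ▸ hx), hsσ hx⟩
      have hFσ : F ⊆ σ := Finset.erase_subset _ _
      have hFc : F.card = d + 1 := by rw [hF, Finset.card_erase_of_mem hwσ, hσcard]; omega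
      have hFX : F ∈ X := by
        rw [hXeq]; exact Finset.mem_union_right _ (Finset.mem_powerset.2 hFσ)
      have hsX : s ∈ X := by
        rw [hXeq]; exact Finset.mem_union_right _ (Finset.mem_powerset.2 hsσ)
      have hβF : β ⊆ F := by
        intro x hx
        refine Finset.mem_erase.2 ⟨?_, Finset.mem_union_right _ hx⟩
        intro h
        exact (Finset.disjoint_left.1 hdisj hwα) (h ▸ hx)
      have hFnotY : F ∉ Y := by
        intro hFY
        have hmem : F ∈ inducedC Y σ := Finset.mem_filter.2 ⟨hFY, hFσ⟩
        rw [hσdef, hind] at hmem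
        obtain ⟨a, ha, b, hbβ, hbne, hab⟩ := mem_join_simplex_boundary.1 hmem
        apply hbne
        apply Finset.Subset.antisymm hbβ
        intro x hx
        have hxF : x ∈ F := hβF hx
        rw [hab] at hxF
        rcases Finset.mem_union.1 hxF with h | h
        · exact absurd (ha h) (Finset.disjoint_right.1 hdisj hx)
        · exact h
      have hcount : (X.filter fun G => G.card = d + 2 ∧ F ⊆ G) = {σ} := by
        rw [hXeq, Finset.filter_union, pow_filter_eq σ F (d + 2) hσcard hFσ]
        have hYe : (Y.filter fun G => G.card = d + 2 ∧ F ⊆ G) = ∅ := by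
          rw [Finset.filter_eq_empty_iff]
          rintro G hG ⟨hGc, hFG⟩
          exact hFnotY (hYdc G hG F hFG)
        rw [hYe, Finset.empty_union]
      refine Finset.mem_filter.2 ⟨hsX, F, Finset.mem_filter.2 ⟨hFX, hFc, ?_⟩, hsF⟩
      rw [hcount]
      simp
    · -- `s` is an old face: reuse the boundary facet from `Y`
      have hsY : s ∈ Y := by
        rw [hXeq] at hs
        rcases Finset.mem_union.1 hs with h | h
        · exact h
        · exact absurd (Finset.mem_powerset.1 h) hsσ
      obtain ⟨_, F, hF, hsF⟩ := Finset.mem_filter.1 (ih s hsY hcard)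
      obtain ⟨hFY, hFc, hFcount⟩ := Finset.mem_filter.1 hF
      have hFnσ : ¬ F ⊆ σ := fun h => hsσ (hsF.trans h)
      have hcount : (X.filter fun G => G.card = d + 2 ∧ F ⊆ G)
          = Y.filter fun G => G.card = d + 2 ∧ F ⊆ G := by
        rw [hXeq, Finset.filter_union, pow_filter_empty σ F (d + 2) hσcard hFnσ,
          Finset.union_empty]
      refine Finset.mem_filter.2 ⟨hYX hsY, F,
        Finset.mem_filter.2 ⟨hYX hFY, hFc, ?_⟩, hsF⟩
      rw [hcount]
      exact hFcount
end
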